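/- Let K and K' be finite posets with Alexandrov topologies T and T', let f : K → K' be order-preserving, and let V and V' be multivector fields on K and K' respectively. Then the identity map κ : (K, T_{V ⋒ f*(V')}) → (K, T_V) and the map λ = f : (K, T_{V ⋒ f*(V')}) → (K', T'_{V'}) are continuous, where for a multivector field W, T_W denotes the topology T_{M(F_W)} associated with the minimal Morse decomposition M(F_W) of F_W. -/

import Mathlib

/-- The closure `cl σ = {τ : τ ⪯ σ}` of a point of a finite poset (e.g. the set of
faces of a simplex in the face poset of a simplicial complex). -/
def clSet {K : Type*} [PartialOrder K] (σ : K) : Set K := {τ | τ ≤ σ}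

/-- A set `A` is orderly convex if `σ₁ ⪯ τ ⪯ σ₂` with `σ₁, σ₂ ∈ A` implies `τ ∈ A`. -/
def OrderlyConvex {K : Type*} [PartialOrder K] (A : Set K) : Prop :=
  ∀ σ₁ ∈ A, ∀ σ₂ ∈ A, ∀ τ : K, σ₁ ≤ τ → τ ≤ σ₂ → τ ∈ A

/-- A multivector field on `K`: a partition of `K` into orderly convex sets. -/
def IsMVF {K : Type*} [PartialOrder K] (𝒱 : Set (Set K)) : Prop :=
  Setoid.IsPartition 𝒱 ∧ ∀ V ∈ 𝒱, OrderlyConvex V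

/-- `[σ]_𝒱`, the member of the partition `𝒱` containing `σ`. -/
def mvClass {K : Type*} (𝒱 : Set (Set K)) (σ : K) : Set K :=
  {τ | ∃ V ∈ 𝒱, σ ∈ V ∧ τ ∈ V}

/-- The combinatorial dynamical system associated with a multivector field:
`F_𝒱 (σ) = cl σ ∪ [σ]_𝒱`. -/
def mvF {K : Type*} [PartialOrder K] (𝒱 : Set (Set K)) (σ : K) : Set K :=
  clSet σ ∪ mvClass 𝒱 σ

/-- A full solution of `F` in the set `A`. -/
def IsFullSol {X : Type*} (F : X → Set X) (A : Set X) (ρ : ℤ → X) : Prop :=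
  (∀ i, ρ i ∈ A) ∧ ∀ i, ρ (i + 1) ∈ F (ρ i)

/-- `A` is invariant: through every point of `A` passes a full solution in `A`
(a bi-infinite walk of the digraph `G_F` within `A`). -/
def IsInvariantSet {X : Type*} (F : X → Set X) (A : Set X) : Prop :=
  ∀ x ∈ A, ∃ ρ : ℤ → X, IsFullSol F A ρ ∧ ∃ i, ρ i = x

/-- Reachability in the digraph `G_F`. -/
def Reaches {X : Type*} (F : X → Set X) : X → X → Prop :=
  Relation.ReflTransGen fun a b => b ∈ F a

/-- `S` is a strongly connected component of `G_F`. -/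
def IsSCC {X : Type*} (F : X → Set X) (S : Set X) : Prop :=
  ∃ x, S = {y | Reaches F x y ∧ Reaches F y x}

/-- The minimal Morse decomposition of `F`: the family of all invariant strongly
connected components of `G_F`. -/
def minMorse {X : Type*} (F : X → Set X) : Set (Set X) :=
  {S | IsSCC F S ∧ IsInvariantSet F S}

/-- `𝒱 ⋒ 𝒲`: the family of non-empty intersections `V ∩ W`, `V ∈ 𝒱`, `W ∈ 𝒲`. -/
def interMVF {K : Type*} (𝒱 𝒲 : Set (Set K)) : Set (Set K) :=
  {A | ∃ V ∈ 𝒱, ∃ W ∈ 𝒲, A = V ∩ W ∧ A.Nonempty}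

/-- The pullback `f*(𝒱') = {f⁻¹(V') : V' ∈ 𝒱', f⁻¹(V') ≠ ∅}` of a multivector
field along a map `f`. -/
def pullbackMVF {K K' : Type*} (f : K → K') (𝒱' : Set (Set K')) : Set (Set K) :=
  {A | ∃ V' ∈ 𝒱', A = f ⁻¹' V' ∧ A.Nonempty}

/-- The Alexandrov topology of a poset: the open sets are the up-sets. -/
def alexandrovTop (K : Type*) [PartialOrder K] : TopologicalSpace K where
  IsOpen U := IsUpperSet U
  isOpen_univ := isUpperSet_univ
  isOpen_inter := fun _ _ hs ht => hs.inter ht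
  isOpen_sUnion := fun _ hS => isUpperSet_sUnion hS

/-- The topology `T_𝒜 = (𝒜 ⋒ t)*` on `K` generated by the family
`{A ∩ U : A ∈ 𝒜, U ∈ t}` (used for families `𝒜` covering `K`, such as minimal
Morse decompositions of multivector fields). -/
def piecedTopFull {X : Type*} (t : TopologicalSpace X) (𝒜 : Set (Set X)) :
    TopologicalSpace X :=
  TopologicalSpace.generateFrom {S | ∃ A ∈ 𝒜, ∃ U : Set X, t.IsOpen U ∧ S = A ∩ U}

/-- The topology `T_𝒱` of the minimal Morse decomposition of the multivector
field `𝒱` on a poset with its Alexandrov topology. -/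
def morseTop {K : Type*} [PartialOrder K] (𝒱 : Set (Set K)) : TopologicalSpace K :=
  piecedTopFull (alexandrovTop K) (minMorse (mvF 𝒱))

/-!
A map that sends edges of `G_F` to edges of `G_G` sends each strongly connected component
of `F` into one of `G`. Since `F_𝒲(σ) ∋ σ`, every strongly connected component is invariant,
so the minimal Morse decomposition of `F_𝒲` is the partition into strongly connected
components; hence the preimage of a Morse set of the target is a union of Morse sets of the
source, and continuity for the pieced topologies reduces to continuity for the Alexandrov
topologies. Both `id` and `f` send edges of `F_{𝒱 ⋒ f*(𝒱')}` to edges of `F_𝒱`, resp.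
`F_{𝒱'}`, because a multivector of `𝒱 ⋒ f*(𝒱')` lies in one of `𝒱` and maps into one of `𝒱'`.
-/

open Topology

def sccOf {X : Type*} (F : X → Set X) (x : X) : Set X :=
  {y | Reaches F x y ∧ Reaches F y x}

section Digraph

variable {X Y : Type*} {F : X → Set X} {G : Y → Set Y}

lemma mem_sccOf_self (x : X) : x ∈ sccOf F x :=
  ⟨Relation.ReflTransGen.refl, Relation.ReflTransGen.refl⟩

lemma sccOf_mem_minMorse (hF : ∀ x, x ∈ F x) (x : X) : sccOf F x ∈ minMorse F :=
  ⟨⟨x, rfl⟩, fun y hy => ⟨fun _ => y, ⟨fun _ => hy, fun _ => hF y⟩, 0, rfl⟩⟩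

lemma eq_sccOf_of_mem_minMorse {A : Set X} (hA : A ∈ minMorse F) {x : X} (hx : x ∈ A) :
    A = sccOf F x := by
  obtain ⟨⟨z, rfl⟩, -⟩ := hA
  ext y
  exact ⟨fun h => ⟨hx.2.trans h.1, h.2.trans hx.1⟩,
    fun h => ⟨hx.1.trans h.1, h.2.trans hx.2⟩⟩

lemma Reaches.map {f : X → Y} (hfG : ∀ a b, b ∈ F a → f b ∈ G (f a)) {x y : X}
    (h : Reaches F x y) : Reaches G (f x) (f y) :=
  Relation.ReflTransGen.lift f hfG _ _ h

lemma mapsTo_sccOf {f : X → Y} (hfG : ∀ a b, b ∈ F a → f b ∈ G (f a)) (x : X) :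
    Set.MapsTo f (sccOf F x) (sccOf G (f x)) :=
  fun _ hy => ⟨hy.1.map hfG, hy.2.map hfG⟩

lemma sccOf_subset_preimage_of_mem_minMorse {f : X → Y}
    (hfG : ∀ a b, b ∈ F a → f b ∈ G (f a)) {A' : Set Y} (hA' : A' ∈ minMorse G)
    {x : X} (hx : f x ∈ A') : sccOf F x ⊆ f ⁻¹' A' := by
  rw [eq_sccOf_of_mem_minMorse hA' hx]
  exact mapsTo_sccOf hfG x

end Digraph

lemma continuous_piecedTopFull {X Y : Type*} {t : TopologicalSpace X}
    {t' : TopologicalSpace Y} {𝒜 : Set (Set X)} {𝒜' : Set (Set Y)} {f : X → Y}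
    (hf : Continuous[t, t'] f)
    (h𝒜 : ∀ A' ∈ 𝒜', ∀ x ∈ f ⁻¹' A', ∃ A ∈ 𝒜, x ∈ A ∧ A ⊆ f ⁻¹' A') :
    Continuous[piecedTopFull t 𝒜, piecedTopFull t' 𝒜'] f := by
  unfold piecedTopFull
  rw [continuous_generateFrom_iff]
  rintro _ ⟨A', hA', U', hU', rfl⟩
  choose! A hA hxA hAA' using h𝒜 A' hA'
  have hunion : f ⁻¹' (A' ∩ U') = ⋃ x ∈ f ⁻¹' (A' ∩ U'), A x ∩ f ⁻¹' U' := by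
    ext y
    simp only [Set.mem_iUnion, Set.mem_inter_iff, Set.mem_preimage, exists_prop]
    exact ⟨fun hy => ⟨y, hy, hxA y hy.1, hy.2⟩,
      fun ⟨x, hx, hyA, hyU⟩ => ⟨hAA' x hx.1 hyA, hyU⟩⟩
  rw [hunion]
  refine @isOpen_biUnion _ _ (TopologicalSpace.generateFrom _) _ _ fun x hx => ?_
  exact TopologicalSpace.GenerateOpen.basic _
    ⟨A x, hA x hx.1, f ⁻¹' U', hf.isOpen_preimage U' hU', rfl⟩

section MultivectorField

variable {K K' : Type*} [PartialOrder K]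

lemma self_mem_mvF (𝒱 : Set (Set K)) (σ : K) : σ ∈ mvF 𝒱 σ :=
  Or.inl le_rfl

lemma continuous_alexandrovTop [PartialOrder K'] {f : K → K'} (hf : Monotone f) :
    Continuous[alexandrovTop K, alexandrovTop K'] f :=
  @Continuous.mk _ _ (alexandrovTop K) (alexandrovTop K') f fun _ hU => IsUpperSet.preimage hU hf

lemma continuous_morseTop [PartialOrder K'] {f : K → K'} (hf : Monotone f) {𝒲 : Set (Set K)}
    {𝒱' : Set (Set K')} (hfF : ∀ σ τ, τ ∈ mvF 𝒲 σ → f τ ∈ mvF 𝒱' (f σ)) :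
    Continuous[morseTop 𝒲, morseTop 𝒱'] f :=
  continuous_piecedTopFull (continuous_alexandrovTop hf) fun _ hA' x hx =>
    ⟨sccOf (mvF 𝒲) x, sccOf_mem_minMorse (self_mem_mvF 𝒲) x, mem_sccOf_self x,
      sccOf_subset_preimage_of_mem_minMorse hfF hA' hx⟩

lemma mvF_interMVF_pullbackMVF_subset (f : K → K') (𝒱 : Set (Set K))
    (𝒱' : Set (Set K')) (σ : K) :
    mvF (interMVF 𝒱 (pullbackMVF f 𝒱')) σ ⊆ mvF 𝒱 σ := by
  rintro τ (h | ⟨_, ⟨V, hV, _, -, rfl, -⟩, hσ, hτ⟩)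
  · exact Or.inl h
  · exact Or.inr ⟨V, hV, hσ.1, hτ.1⟩

lemma map_mem_mvF_of_mem_mvF_interMVF_pullbackMVF [PartialOrder K'] {f : K → K'}
    (hf : Monotone f) (𝒱 : Set (Set K)) (𝒱' : Set (Set K')) {σ τ : K}
    (h : τ ∈ mvF (interMVF 𝒱 (pullbackMVF f 𝒱')) σ) : f τ ∈ mvF 𝒱' (f σ) := by
  rcases h with h | ⟨_, ⟨V, -, _, ⟨V', hV', rfl, -⟩, rfl, -⟩, hσ, hτ⟩
  · exact Or.inl (hf h)
  · exact Or.inr ⟨V', hV', hσ.2, hτ.2⟩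

end MultivectorField

theorem comparison_diagram_continuous_general
    {K K' : Type*} [PartialOrder K] [PartialOrder K']
    (f : K → K') (hf : Monotone f)
    (𝒱 : Set (Set K)) (𝒱' : Set (Set K')) :
    @Continuous K K (morseTop (interMVF 𝒱 (pullbackMVF f 𝒱'))) (morseTop 𝒱)
      (fun σ => σ) ∧
    @Continuous K K' (morseTop (interMVF 𝒱 (pullbackMVF f 𝒱'))) (morseTop 𝒱') f :=
  ⟨continuous_morseTop monotone_id (mvF_interMVF_pullbackMVF_subset f 𝒱 𝒱'),
    continuous_morseTop hf fun _ _ => map_mem_mvF_of_mem_mvF_interMVF_pullbackMVF hf 𝒱 𝒱'⟩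

/-- For an order-preserving `f : K → K'` and multivector fields `𝒱` on `K`, `𝒱'` on
`K'`, the identity map `κ : (K, T_{𝒱 ⋒ f*(𝒱')}) → (K, T_𝒱)` and the map
`λ = f : (K, T_{𝒱 ⋒ f*(𝒱')}) → (K', T'_{𝒱'})` are continuous, where `T_𝒲` denotes
the topology associated with the minimal Morse decomposition of `F_𝒲`. -/
theorem comparison_diagram_continuous
    {K K' : Type*} [PartialOrder K] [Finite K] [PartialOrder K'] [Finite K']
    (f : K → K') (hf : Monotone f)
    (𝒱 : Set (Set K)) (𝒱' : Set (Set K'))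
    (h𝒱 : IsMVF 𝒱) (h𝒱' : IsMVF 𝒱') :
    @Continuous K K (morseTop (interMVF 𝒱 (pullbackMVF f 𝒱'))) (morseTop 𝒱)
      (fun σ => σ) ∧
    @Continuous K K' (morseTop (interMVF 𝒱 (pullbackMVF f 𝒱'))) (morseTop 𝒱') f :=
  comparison_diagram_continuous_general f hf 𝒱 𝒱'
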